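/- arXiv:2206.09331 — 2 statements merged into one kernel-verified Lean document; each statement's English description precedes it below -/
import Mathlib

section
/- Let d, n ≥ 1, M ≥ 0 and c₁ > 0. Let A_{ij}, A_j⁺, A_j⁻, A₀, Q_j, P_j, V : ℝ^d → M_n(ℂ) (for 1 ≤ i, j ≤ d) be measurable matrix-valued functions whose Frobenius norms are bounded by M almost everywhere, and assume the ellipticity condition Re Σ_{i,j=1}^{d} ⟨A_{ij}(x) z_j, z_i⟩_{ℂⁿ} ≥ c₁ Σ_{i=1}^{d} |z_i|² for all z₁, …, z_d ∈ ℂⁿ and almost every x ∈ ℝ^d. Then there exist λ₀ ∈ ℝ and c₄ > 0, depending only on d, n, M and c₁, such that for every λ ∈ ℂ with Re λ < λ₀ and every continuously differentiable compactly supported u : ℝ^d → ℂⁿ: Re [ Σ_{i,j} ∫ ⟨A_{ij} ∂_j u, ∂_i u⟩ + Σ_j ∫ ⟨(A_j⁺ + Q_j) ∂_j u, u⟩ − Σ_j ∫ ⟨(A_j⁻ + P_j) u, ∂_j u⟩ + ∫ ⟨(A₀ + V) u, u⟩ − λ ∫ |u|² ] ≥ c₄ ‖u‖_{H¹}². -/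
open MeasureTheory

noncomputable section

/-- `ℝ^d` with its Euclidean structure. -/
abbrev Ed (d : ℕ) := EuclideanSpace ℝ (Fin d)

/-- `ℂⁿ` with its Euclidean (Hermitian) structure. -/
abbrev Cn (n : ℕ) := EuclideanSpace ℂ (Fin n)

/-- Frobenius norm of a complex `n × n` matrix. -/
def frob {n : ℕ} (A : Matrix (Fin n) (Fin n) ℂ) : ℝ :=
  Real.sqrt (∑ i, ∑ k, ‖A i k‖ ^ 2)

/-- Action of a matrix on a vector of `ℂⁿ`. -/
def matAct {n : ℕ} (A : Matrix (Fin n) (Fin n) ℂ) (v : Cn n) : Cn n :=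
  WithLp.toLp 2 (fun i => ∑ k, A i k * v k)

/-- Standard inner product `⟨a, b⟩` on `ℂⁿ` (linear in the first argument). -/
def dotC {n : ℕ} (a b : Cn n) : ℂ := ∑ k, a k * (starRingEnd ℂ) (b k)

/-- Partial derivative of `u` in the `j`-th coordinate direction. -/
def pd {d n : ℕ} (u : Ed d → Cn n) (j : Fin d) (x : Ed d) : Cn n :=
  fderiv ℝ u x (EuclideanSpace.single j 1)

/-- Square of the `H¹` norm: `∫|u|² + ∫‖Du‖²`, `Du` the total derivative. -/
def hnormSq {d n : ℕ} (u : Ed d → Cn n) : ℝ :=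
  (∫ x, ‖u x‖ ^ 2) + ∫ x, ‖fderiv ℝ u x‖ ^ 2

/-!
Pointwise, ellipticity gives `Re Σᵢⱼ ⟨Aᵢⱼ ∂ⱼu, ∂ᵢu⟩ ≥ c₁ Σⱼ |∂ⱼu|²`. Each first-order term is
bounded by `2M |∂ⱼu| |u|`, which Young's inequality absorbs into `c₁/2 |∂ⱼu|² + 8M²/c₁ |u|²`,
and the zeroth-order term is at least `-2M |u|²`. After integration, taking `Re λ` far enough
below zero turns the remaining multiple of `∫ |u|²` positive, and `‖Du‖² ≤ Σⱼ |∂ⱼu|²` turns the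
partial derivatives into the `H¹` norm.
-/

section FrobeniusNorm

open scoped Matrix.Norms.Frobenius

theorem frob_eq_norm {n : ℕ} (A : Matrix (Fin n) (Fin n) ℂ) : frob A = ‖A‖ := by
  rw [frob, Matrix.frobenius_norm_def, Real.sqrt_eq_rpow]
  simp only [Real.rpow_two]

theorem frob_add_le {n : ℕ} (A B : Matrix (Fin n) (Fin n) ℂ) : frob (A + B) ≤ frob A + frob B := by
  simpa only [frob_eq_norm] using norm_add_le A B

theorem norm_matAct_le {n : ℕ} (A : Matrix (Fin n) (Fin n) ℂ) (v : Cn n) :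
    ‖matAct A v‖ ≤ frob A * ‖v‖ := by
  have hcol (w : Fin n → ℂ) : ‖WithLp.toLp 2 w‖ = ‖Matrix.replicateCol Unit w‖ :=
    (Matrix.frobenius_norm_replicateCol w).symm
  calc ‖matAct A v‖ = ‖A * Matrix.replicateCol Unit v.ofLp‖ := by
        rw [← Matrix.replicateCol_mulVec, ← hcol]; rfl
    _ ≤ ‖A‖ * ‖Matrix.replicateCol Unit v.ofLp‖ := Matrix.frobenius_norm_mul _ _
    _ = frob A * ‖v‖ := by rw [frob_eq_norm, ← hcol]

end FrobeniusNorm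

theorem dotC_eq_inner {n : ℕ} (a b : Cn n) : dotC a b = inner ℂ b a := by
  simp [dotC, PiLp.inner_apply, RCLike.inner_apply]

theorem norm_dotC_matAct_le {n : ℕ} {A : Matrix (Fin n) (Fin n) ℂ} {K : ℝ} (hA : frob A ≤ K)
    (v w : Cn n) : ‖dotC (matAct A v) w‖ ≤ K * (‖v‖ * ‖w‖) :=
  calc ‖dotC (matAct A v) w‖ ≤ ‖w‖ * ‖matAct A v‖ := by
        rw [dotC_eq_inner]; exact norm_inner_le_norm _ _
    _ ≤ ‖w‖ * (K * ‖v‖) := by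
        gcongr; exact (norm_matAct_le A v).trans (by gcongr)
    _ = K * (‖v‖ * ‖w‖) := by ring

/-- The integrand of `𝔤(u, u)` at a point, with `ξ` in place of `(∂ⱼu(x))ⱼ` and `v` of `u(x)`. -/
def formDensity {d n : ℕ} (a : Fin d → Fin d → Matrix (Fin n) (Fin n) ℂ)
    (b c : Fin d → Matrix (Fin n) (Fin n) ℂ) (e : Matrix (Fin n) (Fin n) ℂ)
    (ξ : Fin d → Cn n) (v : Cn n) : ℂ :=
  (∑ i, ∑ j, dotC (matAct (a i j) (ξ j)) (ξ i)) + (∑ j, dotC (matAct (b j) (ξ j)) v)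
    - (∑ j, dotC (matAct (c j) v) (ξ j)) + dotC (matAct e v) v

theorem two_mul_mul_le_weighted_add_sq {c K x y : ℝ} (hc : 0 < c) :
    2 * K * (x * y) ≤ c / 2 * x ^ 2 + 2 * K ^ 2 / c * y ^ 2 := by
  have h : c / 2 * x ^ 2 + 2 * K ^ 2 / c * y ^ 2 - 2 * K * (x * y)
      = c / 2 * (x - 2 * K / c * y) ^ 2 := by
    field_simp; ring
  have := mul_nonneg (half_pos hc).le (sq_nonneg (x - 2 * K / c * y))
  linarith

theorem re_formDensity_ge {d n : ℕ} {a : Fin d → Fin d → Matrix (Fin n) (Fin n) ℂ}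
    {b c : Fin d → Matrix (Fin n) (Fin n) ℂ} {e : Matrix (Fin n) (Fin n) ℂ}
    {ξ : Fin d → Cn n} {v : Cn n} {c₁ K : ℝ} (hc₁ : 0 < c₁)
    (hell : c₁ * ∑ i, ‖ξ i‖ ^ 2 ≤ (∑ i, ∑ j, dotC (matAct (a i j) (ξ j)) (ξ i)).re)
    (hb : ∀ j, frob (b j) ≤ K) (hc : ∀ j, frob (c j) ≤ K) (he : frob e ≤ K) :
    c₁ / 2 * ∑ j, ‖ξ j‖ ^ 2 - (2 * d * K ^ 2 / c₁ + K) * ‖v‖ ^ 2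
      ≤ (formDensity a b c e ξ v).re := by
  have hre {A : Matrix (Fin n) (Fin n) ℂ} (hA : frob A ≤ K) (w w' : Cn n) :=
    abs_le.mp ((Complex.abs_re_le_norm _).trans (norm_dotC_matAct_le hA w w'))
  have hcross (j : Fin d) : -(c₁ / 2 * ‖ξ j‖ ^ 2 + 2 * K ^ 2 / c₁ * ‖v‖ ^ 2)
      ≤ (dotC (matAct (b j) (ξ j)) v).re - (dotC (matAct (c j) v) (ξ j)).re := by
    linarith [hre (hb j) (ξ j) v, hre (hc j) v (ξ j),
      two_mul_mul_le_weighted_add_sq (K := K) (x := ‖ξ j‖) (y := ‖v‖) hc₁]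
  have hsum := Finset.sum_le_sum fun j (_ : j ∈ Finset.univ) => hcross j
  simp only [Finset.sum_neg_distrib, Finset.sum_add_distrib, Finset.sum_sub_distrib,
    ← Finset.mul_sum, Finset.sum_const, Finset.card_univ, Fintype.card_fin, nsmul_eq_mul] at hsum
  rw [show 2 * K ^ 2 / c₁ * (d * ‖v‖ ^ 2) = 2 * d * K ^ 2 / c₁ * ‖v‖ ^ 2 by ring] at hsum
  have he' := (hre he v v).1
  rw [← sq] at he'
  simp only [formDensity, Complex.add_re, Complex.sub_re, Complex.re_sum] at hell ⊢
  linarith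

section Integrals

variable {X : Type*} [MeasurableSpace X] {μ : Measure X} {n : ℕ}

def IsBoundedCoeff (μ : Measure X) (K : ℝ) (B : X → Matrix (Fin n) (Fin n) ℂ) : Prop :=
  (∀ p q, Measurable fun x => B x p q) ∧ ∀ᵐ x ∂μ, frob (B x) ≤ K

theorem IsBoundedCoeff.add {B B' : X → Matrix (Fin n) (Fin n) ℂ} {K K' : ℝ}
    (hB : IsBoundedCoeff μ K B) (hB' : IsBoundedCoeff μ K' B') :
    IsBoundedCoeff μ (K + K') fun x => B x + B' x := by
  refine ⟨fun p q => (hB.1 p q).add (hB'.1 p q), ?_⟩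
  filter_upwards [hB.2, hB'.2] with x h h'
  exact (frob_add_le _ _).trans (add_le_add h h')

variable [TopologicalSpace X] [OpensMeasurableSpace X]

theorem measurable_dotC_matAct {B : X → Matrix (Fin n) (Fin n) ℂ}
    (hB : ∀ p q, Measurable fun x => B x p q) {f g : X → Cn n} (hf : Continuous f)
    (hg : Continuous g) : Measurable fun x => dotC (matAct (B x) (f x)) (g x) := by
  have hcoord (h : X → Cn n) (hh : Continuous h) (k : Fin n) : Measurable fun x => h x k :=
    ((PiLp.continuous_apply 2 _ k).comp hh).measurable
  have := hcoord f hf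
  have := hcoord g hg
  unfold dotC matAct
  fun_prop

variable [IsFiniteMeasureOnCompacts μ]

theorem IsBoundedCoeff.integrable_dotC_matAct {B : X → Matrix (Fin n) (Fin n) ℂ} {K : ℝ}
    (hB : IsBoundedCoeff μ K B) {f g : X → Cn n} (hf : Continuous f) (hfs : HasCompactSupport f)
    (hg : Continuous g) : Integrable (fun x => dotC (matAct (B x) (f x)) (g x)) μ := by
  have hdom : Integrable (fun x => K * (‖f x‖ * ‖g x‖)) μ :=
    ((hf.norm.mul hg.norm).integrable_of_hasCompactSupport hfs.norm.mul_right).const_mul K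
  refine hdom.mono' (measurable_dotC_matAct hB.1 hf hg).aestronglyMeasurable ?_
  filter_upwards [hB.2] with x hx
  exact norm_dotC_matAct_le hx (f x) (g x)

theorem HasCompactSupport.integrable_norm_sq {E : Type*} [NormedAddCommGroup E] {f : X → E}
    (hf : Continuous f) (hfs : HasCompactSupport f) : Integrable (fun x => ‖f x‖ ^ 2) μ := by
  have hs : HasCompactSupport fun x => ‖f x‖ ^ 2 :=
    hfs.comp_left (g := fun v : E => ‖v‖ ^ 2) (by simp)
  exact (hf.norm.pow 2).integrable_of_hasCompactSupport hs

end Integrals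

section FormIntegral

variable {X : Type*} [TopologicalSpace X] [MeasurableSpace X] [OpensMeasurableSpace X]
  {μ : Measure X} [IsFiniteMeasureOnCompacts μ] {d n : ℕ}
  {a : Fin d → Fin d → X → Matrix (Fin n) (Fin n) ℂ} {b c : Fin d → X → Matrix (Fin n) (Fin n) ℂ}
  {e : X → Matrix (Fin n) (Fin n) ℂ} {ξ : Fin d → X → Cn n} {v : X → Cn n} {Ka K : ℝ}
  (ha : ∀ i j, IsBoundedCoeff μ Ka (a i j)) (hb : ∀ j, IsBoundedCoeff μ K (b j))
  (hc : ∀ j, IsBoundedCoeff μ K (c j)) (he : IsBoundedCoeff μ K e)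
  (hξ : ∀ j, Continuous (ξ j)) (hξs : ∀ j, HasCompactSupport (ξ j))
  (hv : Continuous v) (hvs : HasCompactSupport v)

include ha hb hc he hξ hξs hv hvs

theorem integrable_formDensity :
    Integrable (fun x => formDensity (fun i j => a i j x) (fun j => b j x) (fun j => c j x) (e x)
      (fun j => ξ j x) (v x)) μ :=
  (((integrable_finsetSum _ fun i _ => integrable_finsetSum _ fun j _ =>
      (ha i j).integrable_dotC_matAct (hξ j) (hξs j) (hξ i)).add
    (integrable_finsetSum _ fun j _ => (hb j).integrable_dotC_matAct (hξ j) (hξs j) hv)).sub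
    (integrable_finsetSum _ fun j _ => (hc j).integrable_dotC_matAct hv hvs (hξ j))).add
    (he.integrable_dotC_matAct hv hvs hv)

theorem integral_formDensity :
    (∑ i, ∑ j, ∫ x, dotC (matAct (a i j x) (ξ j x)) (ξ i x) ∂μ)
      + (∑ j, ∫ x, dotC (matAct (b j x) (ξ j x)) (v x) ∂μ)
      - (∑ j, ∫ x, dotC (matAct (c j x) (v x)) (ξ j x) ∂μ)
      + (∫ x, dotC (matAct (e x) (v x)) (v x) ∂μ)
      = ∫ x, formDensity (fun i j => a i j x) (fun j => b j x) (fun j => c j x) (e x)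
          (fun j => ξ j x) (v x) ∂μ := by
  have hA i j := (ha i j).integrable_dotC_matAct (hξ j) (hξs j) (hξ i)
  have hB j := (hb j).integrable_dotC_matAct (hξ j) (hξs j) hv
  have hC j := (hc j).integrable_dotC_matAct hv hvs (hξ j)
  have hE := he.integrable_dotC_matAct hv hvs hv
  have hArow i := integrable_finsetSum Finset.univ fun j _ => hA i j
  have hAsum := integrable_finsetSum Finset.univ fun i _ => hArow i
  have hBsum := integrable_finsetSum Finset.univ fun j _ => hB j
  have hCsum := integrable_finsetSum Finset.univ fun j _ => hC j
  simp only [formDensity]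
  rw [integral_add ?_ hE, integral_sub ?_ hCsum, integral_add hAsum hBsum,
    integral_finsetSum _ fun i _ => hArow i, integral_finsetSum _ fun j _ => hB j,
    integral_finsetSum _ fun j _ => hC j]
  · simp only [integral_finsetSum _ fun j _ => hA _ j]
  · exact hAsum.add hBsum
  · exact (hAsum.add hBsum).sub hCsum

theorem re_integral_formDensity_ge {c₁ : ℝ} (hc₁ : 0 < c₁)
    (hell : ∀ᵐ x ∂μ,
      c₁ * ∑ i, ‖ξ i x‖ ^ 2 ≤ (∑ i, ∑ j, dotC (matAct (a i j x) (ξ j x)) (ξ i x)).re) :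
    c₁ / 2 * ∑ j, ∫ x, ‖ξ j x‖ ^ 2 ∂μ - (2 * d * K ^ 2 / c₁ + K) * ∫ x, ‖v x‖ ^ 2 ∂μ
      ≤ ((∑ i, ∑ j, ∫ x, dotC (matAct (a i j x) (ξ j x)) (ξ i x) ∂μ)
        + (∑ j, ∫ x, dotC (matAct (b j x) (ξ j x)) (v x) ∂μ)
        - (∑ j, ∫ x, dotC (matAct (c j x) (v x)) (ξ j x) ∂μ)
        + (∫ x, dotC (matAct (e x) (v x)) (v x) ∂μ)).re := by
  have hpointwise : ∀ᵐ x ∂μ,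
      c₁ / 2 * ∑ j, ‖ξ j x‖ ^ 2 - (2 * d * K ^ 2 / c₁ + K) * ‖v x‖ ^ 2
        ≤ (formDensity (fun i j => a i j x) (fun j => b j x) (fun j => c j x) (e x)
            (fun j => ξ j x) (v x)).re := by
    filter_upwards [hell, ae_all_iff.2 fun j => (hb j).2, ae_all_iff.2 fun j => (hc j).2, he.2]
      with x hx hbx hcx hex
    exact re_formDensity_ge hc₁ hx hbx hcx hex
  have hξ2 j := (hξs j).integrable_norm_sq (μ := μ) (hξ j)
  have hξ2sum := integrable_finsetSum Finset.univ fun j _ => hξ2 j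
  have hv2 := hvs.integrable_norm_sq (μ := μ) hv
  have hF := integrable_formDensity ha hb hc he hξ hξs hv hvs
  rw [integral_formDensity ha hb hc he hξ hξs hv hvs]
  calc _ = ∫ x, (c₁ / 2 * ∑ j, ‖ξ j x‖ ^ 2 - (2 * d * K ^ 2 / c₁ + K) * ‖v x‖ ^ 2) ∂μ := by
        rw [integral_sub (hξ2sum.const_mul _) (hv2.const_mul _), integral_const_mul,
          integral_const_mul, integral_finsetSum _ fun j _ => hξ2 j]
    _ ≤ ∫ x, (formDensity (fun i j => a i j x) (fun j => b j x) (fun j => c j x) (e x)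
            (fun j => ξ j x) (v x)).re ∂μ :=
        integral_mono_ae ((hξ2sum.const_mul _).sub (hv2.const_mul _)) hF.re hpointwise
    _ = _ := integral_re hF

end FormIntegral

theorem norm_sq_le_sum_norm_single_sq {ι F : Type*} [Fintype ι] [DecidableEq ι]
    [NormedAddCommGroup F] [NormedSpace ℝ F] (L : EuclideanSpace ℝ ι →L[ℝ] F) :
    ‖L‖ ^ 2 ≤ ∑ j, ‖L (EuclideanSpace.single j 1)‖ ^ 2 := by
  refine (Real.le_sqrt (norm_nonneg _) (by positivity)).mp <|
    L.opNorm_le_bound (Real.sqrt_nonneg _) fun v => ?_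
  calc ‖L v‖ = ‖∑ j, v j • L (EuclideanSpace.single j 1)‖ := by
        conv_lhs => rw [← (EuclideanSpace.basisFun ι ℝ).sum_repr v]
        simp
    _ ≤ ∑ j, ‖v j‖ * ‖L (EuclideanSpace.single j 1)‖ := by
        refine (norm_sum_le _ _).trans_eq ?_
        simp only [norm_smul]
    _ ≤ √(∑ j, ‖v j‖ ^ 2) * √(∑ j, ‖L (EuclideanSpace.single j 1)‖ ^ 2) :=
        Real.sum_mul_le_sqrt_mul_sqrt _ _ _
    _ = _ := by rw [EuclideanSpace.norm_eq, mul_comm]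

theorem ContDiff.continuous_pd {d n : ℕ} {u : Ed d → Cn n} (hu : ContDiff ℝ 1 u) (j : Fin d) :
    Continuous (pd u j) :=
  (hu.continuous_fderiv one_ne_zero).clm_apply continuous_const

theorem HasCompactSupport.pd {d n : ℕ} {u : Ed d → Cn n} (hu : HasCompactSupport u) (j : Fin d) :
    HasCompactSupport (pd u j) :=
  hu.fderiv_apply ℝ _

theorem hnormSq_le_sum_integral_pd {d n : ℕ} {u : Ed d → Cn n} (hu : ContDiff ℝ 1 u)
    (hus : HasCompactSupport u) :
    hnormSq u ≤ (∫ x, ‖u x‖ ^ 2) + ∑ j, ∫ x, ‖pd u j x‖ ^ 2 := by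
  have hpd2 j := (hus.pd j).integrable_norm_sq (μ := volume) (hu.continuous_pd j)
  rw [hnormSq, ← integral_finsetSum _ fun j _ => hpd2 j]
  exact add_le_add_right (integral_mono
    ((hus.fderiv ℝ).integrable_norm_sq (hu.continuous_fderiv one_ne_zero))
    (integrable_finsetSum _ fun j _ => hpd2 j) fun x => norm_sq_le_sum_norm_single_sq _) _

theorem stmt_3_general (d n : ℕ)
    (M : ℝ) (c₁ : ℝ) (hc₁ : 0 < c₁) :
    ∃ (lam₀ c₄ : ℝ), 0 < c₄ ∧
      ∀ (A : Fin d → Fin d → Ed d → Matrix (Fin n) (Fin n) ℂ)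
        (Ap Am : Fin d → Ed d → Matrix (Fin n) (Fin n) ℂ)
        (A₀ : Ed d → Matrix (Fin n) (Fin n) ℂ)
        (Q P : Fin d → Ed d → Matrix (Fin n) (Fin n) ℂ)
        (W : Ed d → Matrix (Fin n) (Fin n) ℂ),
        (∀ i j p q, Measurable fun x => A i j x p q) →
        (∀ j p q, Measurable fun x => Ap j x p q) →
        (∀ j p q, Measurable fun x => Am j x p q) →
        (∀ p q, Measurable fun x => A₀ x p q) →
        (∀ j p q, Measurable fun x => Q j x p q) →
        (∀ j p q, Measurable fun x => P j x p q) →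
        (∀ p q, Measurable fun x => W x p q) →
        (∀ᵐ x, ∀ i j, frob (A i j x) ≤ M) →
        (∀ᵐ x, ∀ j, frob (Ap j x) ≤ M ∧ frob (Am j x) ≤ M
          ∧ frob (Q j x) ≤ M ∧ frob (P j x) ≤ M) →
        (∀ᵐ x, frob (A₀ x) ≤ M ∧ frob (W x) ≤ M) →
        (∀ᵐ x, ∀ z : Fin d → Cn n,
          c₁ * ∑ i, ‖z i‖ ^ 2
            ≤ (∑ i, ∑ j, dotC (matAct (A i j x) (z j)) (z i)).re) →
        ∀ lam : ℂ, lam.re < lam₀ →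
        ∀ u : Ed d → Cn n, ContDiff ℝ 1 u → HasCompactSupport u →
        c₄ * hnormSq u ≤
          ((∑ i, ∑ j, ∫ x, dotC (matAct (A i j x) (pd u j x)) (pd u i x))
            + (∑ j, ∫ x, dotC (matAct (Ap j x + Q j x) (pd u j x)) (u x))
            - (∑ j, ∫ x, dotC (matAct (Am j x + P j x) (u x)) (pd u j x))
            + (∫ x, dotC (matAct (A₀ x + W x) (u x)) (u x))
            - lam * ((∫ x, ‖u x‖ ^ 2 : ℝ) : ℂ)).re := by
  refine ⟨-(2 * d * (M + M) ^ 2 / c₁ + (M + M) + c₁ / 2), c₁ / 2, by positivity, ?_⟩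
  intro A Ap Am A₀ Q P W hA hAp hAm hA₀ hQ hP hW hA_le hApQ_le hA₀W_le hell lam hlam u hu hus
  have coeff {B : Ed d → Matrix (Fin n) (Fin n) ℂ} (hB : ∀ p q, Measurable fun x => B x p q)
      (hB_le : ∀ᵐ x, frob (B x) ≤ M) : IsBoundedCoeff volume M B := ⟨hB, hB_le⟩
  have hgarding := re_integral_formDensity_ge
    (fun i j => coeff (hA i j) (hA_le.mono fun x hx => hx i j))
    (fun j => (coeff (hAp j) (hApQ_le.mono fun x hx => (hx j).1)).add
      (coeff (hQ j) (hApQ_le.mono fun x hx => (hx j).2.2.1)))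
    (fun j => (coeff (hAm j) (hApQ_le.mono fun x hx => (hx j).2.1)).add
      (coeff (hP j) (hApQ_le.mono fun x hx => (hx j).2.2.2)))
    ((coeff hA₀ (hA₀W_le.mono fun x hx => hx.1)).add (coeff hW (hA₀W_le.mono fun x hx => hx.2)))
    hu.continuous_pd hus.pd hu.continuous hus hc₁ (hell.mono fun x hx => hx _)
  have hu2 : 0 ≤ ∫ x, ‖u x‖ ^ 2 := integral_nonneg fun x => by positivity
  have hlam_u2 := mul_le_mul_of_nonneg_right hlam.le hu2
  have hH1 := mul_le_mul_of_nonneg_left (hnormSq_le_sum_integral_pd hu hus)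
    (by positivity : 0 ≤ c₁ / 2)
  rw [Complex.sub_re, Complex.mul_re, Complex.ofReal_re, Complex.ofReal_im, mul_zero, sub_zero]
  linarith

/-- Uniform coercivity estimate (3.7) of the paper, on `Ω = ℝ^d`:
for bounded measurable matrix coefficients satisfying the ellipticity condition there
exist `λ₀ ∈ ℝ` and `c₄ > 0`, depending only on `d`, `n`, `M`, `c₁`, such that for all
`λ` with `Re λ < λ₀` and all `C¹` compactly supported `u` the real part of the
sesquilinear form `𝔤_λ(u,u)` is at least `c₄‖u‖²_{H¹}`. -/
theorem stmt_3 (d n : ℕ) (hd : 1 ≤ d) (hn : 1 ≤ n)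
    (M : ℝ) (hM : 0 ≤ M) (c₁ : ℝ) (hc₁ : 0 < c₁) :
    ∃ (lam₀ c₄ : ℝ), 0 < c₄ ∧
      ∀ (A : Fin d → Fin d → Ed d → Matrix (Fin n) (Fin n) ℂ)
        (Ap Am : Fin d → Ed d → Matrix (Fin n) (Fin n) ℂ)
        (A₀ : Ed d → Matrix (Fin n) (Fin n) ℂ)
        (Q P : Fin d → Ed d → Matrix (Fin n) (Fin n) ℂ)
        (W : Ed d → Matrix (Fin n) (Fin n) ℂ),
        (∀ i j p q, Measurable fun x => A i j x p q) →
        (∀ j p q, Measurable fun x => Ap j x p q) →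
        (∀ j p q, Measurable fun x => Am j x p q) →
        (∀ p q, Measurable fun x => A₀ x p q) →
        (∀ j p q, Measurable fun x => Q j x p q) →
        (∀ j p q, Measurable fun x => P j x p q) →
        (∀ p q, Measurable fun x => W x p q) →
        (∀ᵐ x, ∀ i j, frob (A i j x) ≤ M) →
        (∀ᵐ x, ∀ j, frob (Ap j x) ≤ M ∧ frob (Am j x) ≤ M
          ∧ frob (Q j x) ≤ M ∧ frob (P j x) ≤ M) →
        (∀ᵐ x, frob (A₀ x) ≤ M ∧ frob (W x) ≤ M) →
        (∀ᵐ x, ∀ z : Fin d → Cn n,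
          c₁ * ∑ i, ‖z i‖ ^ 2
            ≤ (∑ i, ∑ j, dotC (matAct (A i j x) (z j)) (z i)).re) →
        ∀ lam : ℂ, lam.re < lam₀ →
        ∀ u : Ed d → Cn n, ContDiff ℝ 1 u → HasCompactSupport u →
        c₄ * hnormSq u ≤
          ((∑ i, ∑ j, ∫ x, dotC (matAct (A i j x) (pd u j x)) (pd u i x))
            + (∑ j, ∫ x, dotC (matAct (Ap j x + Q j x) (pd u j x)) (u x))
            - (∑ j, ∫ x, dotC (matAct (Am j x + P j x) (u x)) (pd u j x))
            + (∫ x, dotC (matAct (A₀ x + W x) (u x)) (u x))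
            - lam * ((∫ x, ‖u x‖ ^ 2 : ℝ) : ℂ)).re :=
  stmt_3_general d n M c₁ hc₁

end
end

section
/- Let d, n ≥ 1. There exists a constant C > 0, depending only on d, with the following property. Let r > 0, s ∈ (0, 1/2], M ≥ 0, let I be a countable index set and (M_k)_{k∈I} points of ℝ^d with |M_k − M_j| ≥ r whenever k ≠ j, and let V : ℝ^d → M_n(ℂ) be measurable with Frobenius norm |V(x)| ≤ M almost everywhere and V(x) = 0 for almost every x outside ⋃_{k∈I} B(M_k, r s), where B(a, t) is the open ball of radius t centered at a. Then, setting η := r/3, for every γ ∈ ℤ^d one has |η^{−d} ∫_{□_γ^η} V(x) dx| ≤ C M s^d and η^{−d} ∫_{□_γ^η} |V(x)|² dx ≤ C M² s^d. -/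
/-!
The balls `B(M_k, r/2)` are pairwise disjoint, and those whose concentric ball `B(M_k, r s)`
meets a cell of side `η = r/3` lie in the `r`-neighbourhood of the cell, inside a box of side `7η`.
Since `|B(M_k, r s)| = (2s)^d |B(M_k, r/2)|`, the part of the cell where `V` can be nonzero has
measure at most `(2s)^d (7η)^d = (14 s η)^d`. Both estimates follow by integrating `|V| ≤ M`
over that part, through Minkowski's inequality `|∫ V| ≤ ∫ |V|` for the first.
-/

open MeasureTheory

noncomputable section

/-- The cell `□_γ^η = η•γ + [0,η]^d` of the rescaled lattice `ηℤ^d`. -/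
def cell (d : ℕ) (η : ℝ) (γ : Fin d → ℤ) : Set (Ed d) :=
  {x | ∀ i, η * γ i ≤ x i ∧ x i ≤ η * γ i + η}

open Function Metric Module Set WithLp

section SeparatedBalls

variable {E : Type*} [NormedAddCommGroup E] [NormedSpace ℝ E] [MeasurableSpace E] [BorelSpace E]
  [FiniteDimensional ℝ E] (μ : Measure E) [μ.IsAddHaarMeasure]

lemma measure_iUnion_ball_inter_le {I : Type*} [Countable I] {pts : I → E} {r s : ℝ}
    (hsep : ∀ k j, k ≠ j → r ≤ dist (pts k) (pts j)) (hs : 0 < s) (hs2 : s ≤ 1 / 2)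
    (S : Set E) :
    μ ((⋃ k, ball (pts k) (r * s)) ∩ S)
      ≤ ENNReal.ofReal ((2 * s) ^ finrank ℝ E) * μ (thickening r S) := by
  set K := {k : I // (ball (pts k) (r * s) ∩ S).Nonempty}
  have hcover : (⋃ k, ball (pts k) (r * s)) ∩ S ⊆ ⋃ k : K, ball (pts k.1) (r * s) := by
    rintro x ⟨hxU, hxS⟩
    obtain ⟨k, hk⟩ := mem_iUnion.1 hxU
    exact mem_iUnion.2 ⟨⟨k, x, hk, hxS⟩, hk⟩
  have hball (k : I) : μ (ball (pts k) (r * s))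
      = ENNReal.ofReal ((2 * s) ^ finrank ℝ E) * μ (ball (pts k) (r / 2)) := by
    rw [show r * s = (2 * s) * (r / 2) by ring, Measure.addHaar_ball_mul_of_pos μ _ (by positivity),
      Measure.addHaar_ball_center μ (pts k)]
  have hdisj : Pairwise (Disjoint on fun k : K => ball (pts k.1) (r / 2)) := fun k j hkj =>
    ball_disjoint_ball <| by linarith [hsep k.1 j.1 fun h => hkj (Subtype.ext h)]
  have hthick : (⋃ k : K, ball (pts k.1) (r / 2)) ⊆ thickening r S := by
    refine iUnion_subset fun ⟨k, y, hyk, hyS⟩ x hxk => mem_thickening_iff.2 ⟨y, hyS, ?_⟩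
    calc dist x y ≤ dist x (pts k) + dist y (pts k) := dist_triangle_right _ _ _
      _ < r / 2 + r * s := add_lt_add (mem_ball.1 hxk) (mem_ball.1 hyk)
      _ ≤ r := by nlinarith [(mem_ball.1 hxk).trans_le' dist_nonneg]
  calc μ ((⋃ k, ball (pts k) (r * s)) ∩ S)
      ≤ ∑' k : K, μ (ball (pts k.1) (r * s)) := (measure_mono hcover).trans (measure_iUnion_le _)
    _ = ENNReal.ofReal ((2 * s) ^ finrank ℝ E) * μ (⋃ k : K, ball (pts k.1) (r / 2)) := by
      simp_rw [hball]
      rw [ENNReal.tsum_mul_left, measure_iUnion hdisj fun _ => measurableSet_ball]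
    _ ≤ ENNReal.ofReal ((2 * s) ^ finrank ℝ E) * μ (thickening r S) := by
      gcongr

end SeparatedBalls

section Cells

variable {d : ℕ}

lemma cell_eq_preimage_Icc (η : ℝ) (γ : Fin d → ℤ) :
    cell d η γ = ofLp ⁻¹' Icc (fun i => η * γ i) (fun i => η * γ i + η) := by
  ext x
  simp [cell, Pi.le_def, forall_and]

lemma volume_preimage_Icc {ι : Type*} [Fintype ι] (a b : ι → ℝ) :
    volume (ofLp ⁻¹' Icc a b : Set (EuclideanSpace ℝ ι)) = ∏ i, ENNReal.ofReal (b i - a i) := by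
  rw [(PiLp.volume_preserving_ofLp ι).measure_preimage measurableSet_Icc.nullMeasurableSet,
    Real.volume_Icc_pi]

lemma volume_cell_ne_top (η : ℝ) (γ : Fin d → ℤ) : volume (cell d η γ) ≠ ⊤ := by
  rw [cell_eq_preimage_Icc, volume_preimage_Icc]
  exact ENNReal.prod_ne_top fun _ _ => ENNReal.ofReal_ne_top

lemma thickening_preimage_Icc_subset {ι : Type*} [Fintype ι] (a b : ι → ℝ) (r : ℝ) :
    thickening r (ofLp ⁻¹' Icc a b : Set (EuclideanSpace ℝ ι))
      ⊆ ofLp ⁻¹' Icc (fun i => a i - r) (fun i => b i + r) := by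
  intro x hx
  obtain ⟨y, ⟨hay, hyb⟩, hxy⟩ := mem_thickening_iff.1 hx
  have hcoord (i : ι) : |x i - y i| ≤ r :=
    (PiLp.dist_apply_le x y i).trans hxy.le
  exact ⟨fun i => by linarith [hay i, (abs_le.1 (hcoord i)).1],
    fun i => by linarith [hyb i, (abs_le.1 (hcoord i)).2]⟩

lemma volume_thickening_cell_le {η r : ℝ} (hη : 0 ≤ η) (hr : 0 ≤ r) (γ : Fin d → ℤ) :
    volume (thickening r (cell d η γ)) ≤ ENNReal.ofReal ((η + 2 * r) ^ d) := by
  rw [cell_eq_preimage_Icc]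
  refine (measure_mono (thickening_preimage_Icc_subset _ _ r)).trans_eq ?_
  rw [volume_preimage_Icc, ENNReal.ofReal_pow (by positivity)]
  simp [show ∀ i : Fin d, η * γ i + η + r - (η * γ i - r) = η + 2 * r from fun i => by ring]

lemma measureReal_iUnion_ball_inter_cell_le {I : Type*} [Countable I] {pts : I → Ed d}
    {r s : ℝ} (hr : 0 < r) (hs : 0 < s) (hs2 : s ≤ 1 / 2)
    (hsep : ∀ k j, k ≠ j → r ≤ dist (pts k) (pts j)) (γ : Fin d → ℤ) :
    ((r / 3) ^ d)⁻¹ * volume.real ((⋃ k, ball (pts k) (r * s)) ∩ cell d (r / 3) γ)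
      ≤ 14 ^ d * s ^ d := by
  have hmeas : volume ((⋃ k, ball (pts k) (r * s)) ∩ cell d (r / 3) γ)
      ≤ ENNReal.ofReal ((14 * s * (r / 3)) ^ d) := by
    refine (measure_iUnion_ball_inter_le volume hsep hs hs2 _).trans ?_
    rw [finrank_euclideanSpace_fin, show 14 * s * (r / 3) = (2 * s) * (r / 3 + 2 * r) by ring,
      mul_pow (2 * s), ENNReal.ofReal_mul (by positivity)]
    gcongr
    exact volume_thickening_cell_le (by positivity) hr.le γ
  have hreal := ENNReal.toReal_le_of_le_ofReal (by positivity) hmeas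
  rw [inv_mul_le_iff₀ (by positivity)]
  calc volume.real _ ≤ (14 * s * (r / 3)) ^ d := hreal
    _ = (r / 3) ^ d * (14 ^ d * s ^ d) := by rw [mul_pow, mul_pow]; ring

end Cells

section Frobenius

variable {n : ℕ}

lemma frob_zero : frob (0 : Matrix (Fin n) (Fin n) ℂ) = 0 := by
  simp [frob]

lemma norm_le_frob (A : Matrix (Fin n) (Fin n) ℂ) (p q : Fin n) : ‖A p q‖ ≤ frob A := by
  refine Real.le_sqrt_of_sq_le ?_
  calc ‖A p q‖ ^ 2 ≤ ∑ k, ‖A p k‖ ^ 2 :=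
        Finset.single_le_sum (f := fun k => ‖A p k‖ ^ 2) (fun _ _ => by positivity)
          (Finset.mem_univ q)
    _ ≤ ∑ i, ∑ k, ‖A i k‖ ^ 2 :=
        Finset.single_le_sum (f := fun i => ∑ k, ‖A i k‖ ^ 2) (fun _ _ => by positivity)
          (Finset.mem_univ p)

lemma frob_const_mul (c : ℂ) (A : Matrix (Fin n) (Fin n) ℂ) :
    frob (fun p q => c * A p q) = ‖c‖ * frob A := by
  simp only [frob, norm_mul, mul_pow, ← Finset.mul_sum]
  rw [Real.sqrt_mul (by positivity), Real.sqrt_sq (norm_nonneg c)]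

lemma frob_eq_norm_toLp (A : Matrix (Fin n) (Fin n) ℂ) :
    frob A = ‖(toLp 2 fun pq => A pq.1 pq.2 : EuclideanSpace ℂ (Fin n × Fin n))‖ := by
  rw [EuclideanSpace.norm_eq, frob, Fintype.sum_prod_type]

lemma frob_integral_le {α : Type*} [MeasurableSpace α] {μ : Measure α}
    {V : α → Matrix (Fin n) (Fin n) ℂ} (hV : ∀ p q, Integrable (fun x => V x p q) μ) :
    frob (fun p q => ∫ x, V x p q ∂μ) ≤ ∫ x, frob (V x) ∂μ := by
  let F : α → EuclideanSpace ℂ (Fin n × Fin n) := fun x => toLp 2 fun pq => V x pq.1 pq.2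
  have hF (pq : Fin n × Fin n) : Integrable (fun x => F x pq) μ := hV pq.1 pq.2
  calc frob (fun p q => ∫ x, V x p q ∂μ)
        = ‖(toLp 2 fun pq => ∫ x, V x pq.1 pq.2 ∂μ : EuclideanSpace ℂ (Fin n × Fin n))‖ :=
          frob_eq_norm_toLp _
    _ = ‖∫ x, F x ∂μ‖ := by
        congr 1
        ext pq
        exact (eval_integral_piLp hF pq).symm
    _ ≤ ∫ x, ‖F x‖ ∂μ := norm_integral_le_integral_norm _
    _ = ∫ x, frob (V x) ∂μ := by simp_rw [frob_eq_norm_toLp]; rfl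

end Frobenius

section BoundedSupport

variable {α : Type*} [MeasurableSpace α] {μ : Measure α} [IsFiniteMeasure μ] {U : Set α}
  {n : ℕ} {V : α → Matrix (Fin n) (Fin n) ℂ} {M : ℝ}

lemma integral_le_mul_measureReal (hU : MeasurableSet U) {g : α → ℝ} {c : ℝ}
    (hg : 0 ≤ᵐ[μ] g) (hgc : ∀ᵐ x ∂μ, g x ≤ c) (hgU : ∀ᵐ x ∂μ, x ∉ U → g x = 0) :
    ∫ x, g x ∂μ ≤ c * μ.real U := by
  have hind : g ≤ᵐ[μ] U.indicator fun _ => c := by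
    filter_upwards [hgc, hgU] with x hxc hxU
    by_cases hx : x ∈ U
    · simpa [hx] using hxc
    · simp [hx, hxU hx]
  calc ∫ x, g x ∂μ ≤ ∫ x, U.indicator (fun _ => c) x ∂μ :=
        integral_mono_of_nonneg hg ((integrable_const c).indicator hU) hind
    _ = c * μ.real U := by rw [integral_indicator_const c hU, smul_eq_mul, mul_comm]

lemma frob_integral_le_mul_measureReal (hU : MeasurableSet U)
    (hVm : ∀ p q, AEStronglyMeasurable (fun x => V x p q) μ) (hVM : ∀ᵐ x ∂μ, frob (V x) ≤ M)
    (hVU : ∀ᵐ x ∂μ, x ∉ U → V x = 0) :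
    frob (fun p q => ∫ x, V x p q ∂μ) ≤ M * μ.real U := by
  have hint (p q : Fin n) : Integrable (fun x => V x p q) μ :=
    .of_bound (hVm p q) M (hVM.mono fun x hx => (norm_le_frob _ p q).trans hx)
  refine (frob_integral_le hint).trans <| integral_le_mul_measureReal hU
    (ae_of_all _ fun _ => Real.sqrt_nonneg _) hVM ?_
  filter_upwards [hVU] with x hx hxU
  rw [hx hxU, frob_zero]

lemma integral_frob_sq_le_mul_measureReal (hU : MeasurableSet U)
    (hVM : ∀ᵐ x ∂μ, frob (V x) ≤ M) (hVU : ∀ᵐ x ∂μ, x ∉ U → V x = 0) :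
    ∫ x, frob (V x) ^ 2 ∂μ ≤ M ^ 2 * μ.real U := by
  refine integral_le_mul_measureReal hU (ae_of_all _ fun _ => sq_nonneg _)
    (hVM.mono fun x hx => pow_le_pow_left₀ (Real.sqrt_nonneg _) hx 2) ?_
  filter_upwards [hVU] with x hx hxU
  rw [hx hxU, frob_zero, sq, zero_mul]

end BoundedSupport

theorem stmt_11_general (d : ℕ) :
    ∃ C : ℝ, 0 < C ∧
      ∀ (n : ℕ), 1 ≤ n →
      ∀ (r s M : ℝ), 0 < r → 0 < s → s ≤ 1 / 2 → 0 ≤ M →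
      ∀ (I : Type), Countable I →
      ∀ (pts : I → Ed d),
        (∀ k j : I, k ≠ j → r ≤ dist (pts k) (pts j)) →
      ∀ (V : Ed d → Matrix (Fin n) (Fin n) ℂ),
        (∀ p q, Measurable fun x => V x p q) →
        (∀ᵐ x, frob (V x) ≤ M) →
        (∀ᵐ x, x ∉ (⋃ k, Metric.ball (pts k) (r * s)) → V x = 0) →
      ∀ γ : Fin d → ℤ,
        frob (fun p q =>
            (((r / 3 : ℝ) : ℂ) ^ d)⁻¹ * ∫ x in cell d (r / 3) γ, V x p q)
          ≤ C * M * s ^ d ∧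
        ((r / 3) ^ d)⁻¹ * ∫ x in cell d (r / 3) γ, (frob (V x)) ^ 2
          ≤ C * M ^ 2 * s ^ d := by
  refine ⟨14 ^ d, by positivity, ?_⟩
  intro n _ r s M hr hs hs2 hM I _ pts hsep V hVm hVM hVU γ
  set U := ⋃ k, ball (pts k) (r * s)
  set μ := volume.restrict (cell d (r / 3) γ)
  have : IsFiniteMeasure μ := isFiniteMeasure_restrict.2 (volume_cell_ne_top _ γ)
  have hU : MeasurableSet U := MeasurableSet.iUnion fun _ => measurableSet_ball
  have hμU : ((r / 3) ^ d)⁻¹ * μ.real U ≤ 14 ^ d * s ^ d := by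
    rw [measureReal_restrict_apply hU]
    exact measureReal_iUnion_ball_inter_cell_le hr hs hs2 hsep γ
  constructor
  · calc frob (fun p q => (((r / 3 : ℝ) : ℂ) ^ d)⁻¹ * ∫ x, V x p q ∂μ)
        = ((r / 3) ^ d)⁻¹ * frob (fun p q => ∫ x, V x p q ∂μ) := by
          refine (frob_const_mul _ _).trans ?_
          simp [abs_of_pos hr]
      _ ≤ M * (((r / 3) ^ d)⁻¹ * μ.real U) := by
          rw [mul_left_comm]
          gcongr
          exact frob_integral_le_mul_measureReal hU (fun p q => (hVm p q).aestronglyMeasurable)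
            (ae_restrict_of_ae hVM) (ae_restrict_of_ae hVU)
      _ ≤ M * (14 ^ d * s ^ d) := by gcongr
      _ = 14 ^ d * M * s ^ d := by ring
  · calc ((r / 3) ^ d)⁻¹ * ∫ x, frob (V x) ^ 2 ∂μ
        ≤ M ^ 2 * (((r / 3) ^ d)⁻¹ * μ.real U) := by
          rw [mul_left_comm]
          gcongr
          exact integral_frob_sq_le_mul_measureReal hU (ae_restrict_of_ae hVM)
            (ae_restrict_of_ae hVU)
      _ ≤ M ^ 2 * (14 ^ d * s ^ d) := by gcongr
      _ = 14 ^ d * M ^ 2 * s ^ d := by ring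

/-- Cell-average estimate of the sparse-distribution example
(Section 3.2): a bounded measurable coefficient supported on balls of radius `r·s`
around `r`-separated points satisfies, with `η := r/3` and `C = C(d)`,
`|η^{-d}∫_{□_γ^η} V| ≤ C M s^d` and `η^{-d}∫_{□_γ^η}|V|² ≤ C M² s^d` for all cells. -/
theorem stmt_11 (d : ℕ) (hd : 1 ≤ d) :
    ∃ C : ℝ, 0 < C ∧
      ∀ (n : ℕ), 1 ≤ n →
      ∀ (r s M : ℝ), 0 < r → 0 < s → s ≤ 1 / 2 → 0 ≤ M →
      ∀ (I : Type), Countable I →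
      ∀ (pts : I → Ed d),
        (∀ k j : I, k ≠ j → r ≤ dist (pts k) (pts j)) →
      ∀ (V : Ed d → Matrix (Fin n) (Fin n) ℂ),
        (∀ p q, Measurable fun x => V x p q) →
        (∀ᵐ x, frob (V x) ≤ M) →
        (∀ᵐ x, x ∉ (⋃ k, Metric.ball (pts k) (r * s)) → V x = 0) →
      ∀ γ : Fin d → ℤ,
        frob (fun p q =>
            (((r / 3 : ℝ) : ℂ) ^ d)⁻¹ * ∫ x in cell d (r / 3) γ, V x p q)
          ≤ C * M * s ^ d ∧
        ((r / 3) ^ d)⁻¹ * ∫ x in cell d (r / 3) γ, (frob (V x)) ^ 2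
          ≤ C * M ^ 2 * s ^ d :=
  stmt_11_general d

end
end
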